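/- (Polynomial identity underlying backward bisimulation.) Let (S,R) be a CRN with vector field F, H a partition of S with choice function μ, and Q the set of ≈_H-classes of reactant multisets occurring in R. Then for any species X and any V ∈ ℝ^S_{≥0} constant on H, F_X(V) = Σ_{[ρ0]∈Q} c(X,[ρ0]) · Π_{Y∈S} V_Y^{ρ0(Y)}, where c(X,[ρ0]) := Σ_{ρ ∈ [ρ0]} fr(X,ρ). Consequently, for X_i, X_j in the same block, F_{X_i}(V) = F_{X_j}(V) for all V constant on H if and only if c(X_i,[ρ0]) = c(X_j,[ρ0]) for all [ρ0] ∈ Q. -/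
import Mathlib


open scoped Classical BigOperators

/-- A chemical reaction `ρ →α π`. -/
structure Reaction (S : Type*) where
  reactant : Multiset S
  product  : Multiset S
  rate     : ℝ

variable {S : Type*}

/-- ρ-reaction rate `crr(X,ρ) = (ρ(X)+1) · Σ_{X+ρ →α π ∈ R} α`. -/
noncomputable def crr [DecidableEq S] (Rs : Finset (Reaction S)) (X : S) (ρ : Multiset S) : ℝ :=
  ((ρ.count X : ℝ) + 1) * ∑ r ∈ Rs, if r.reactant = X ::ₘ ρ then r.rate else 0

/-- ρ-production rate `pr(X,ρ,Z) = (ρ(X)+1) · Σ_{X+ρ →α π ∈ R} α·π(Z)`. -/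
noncomputable def pr [DecidableEq S] (Rs : Finset (Reaction S)) (X : S) (ρ : Multiset S) (Z : S) : ℝ :=
  ((ρ.count X : ℝ) + 1) * ∑ r ∈ Rs, if r.reactant = X ::ₘ ρ then r.rate * (r.product.count Z : ℝ) else 0

/-- production rate towards a set of species: `pr(X,ρ,H) = Σ_{Z ∈ H} pr(X,ρ,Z)`. -/
noncomputable def prB [DecidableEq S] [Fintype S] (Rs : Finset (Reaction S)) (X : S) (ρ : Multiset S) (H : Set S) : ℝ :=
  ∑ Z : S, if Z ∈ H then pr Rs X ρ Z else 0

/-- ρ-flux rate `fr(X,ρ) = Σ_{ρ →α π ∈ R} (π(X)−ρ(X))·α`. -/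
noncomputable def fr [DecidableEq S] (Rs : Finset (Reaction S)) (X : S) (ρ : Multiset S) : ℝ :=
  ∑ r ∈ Rs, if r.reactant = ρ then ((r.product.count X : ℝ) - (ρ.count X : ℝ)) * r.rate else 0

/-- cumulative flux rate `fr(X,M) = Σ_{ρ ∈ M} fr(X,ρ)`. -/
noncomputable def frM [DecidableEq S] (Rs : Finset (Reaction S)) (X : S) (M : Finset (Multiset S)) : ℝ :=
  ∑ ρ ∈ M, fr Rs X ρ

/-- mass-action vector field `F_X(V) = Σ_{ρ→α π}(π(X)−ρ(X))·α·Π_Y V_Y^{ρ(Y)}`. -/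
noncomputable def vf [DecidableEq S] [Fintype S] (Rs : Finset (Reaction S)) (V : S → ℝ) (X : S) : ℝ :=
  ∑ r ∈ Rs, ((r.product.count X : ℝ) - (r.reactant.count X : ℝ)) * r.rate * ∏ Y : S, V Y ^ r.reactant.count Y

/-- `μ` is a choice function for the partition induced by the equivalence `e`:
it maps every species to a fixed representative of its block. -/
def IsChoice (e : S → S → Prop) (μ : S → S) : Prop :=
  (∀ X, e X (μ X)) ∧ ∀ X Y, e X Y → μ X = μ Y

/-- forward splitter condition for a pair `(X,Y)` w.r.t. the partition induced by `e`. -/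
def FSplit [DecidableEq S] [Fintype S] (Rs : Finset (Reaction S)) (e : S → S → Prop) (X Y : S) : Prop :=
  ∀ ρ : Multiset S, crr Rs X ρ = crr Rs Y ρ ∧
    ∀ W : S, prB Rs X ρ {Z | e W Z} = prB Rs Y ρ {Z | e W Z}

/-- `e` is a forward CRN bisimulation. -/
def IsFB [DecidableEq S] [Fintype S] (Rs : Finset (Reaction S)) (e : S → S → Prop) : Prop :=
  Equivalence e ∧ ∀ X Y, e X Y → FSplit Rs e X Y

/-- the `≈`-class (w.r.t. the choice function `μ`) of the reactant multiset `ρ0`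
among reactant multisets occurring in `Rs`. -/
noncomputable def reactClass [DecidableEq S] (Rs : Finset (Reaction S)) (μ : S → S) (ρ0 : Multiset S) : Finset (Multiset S) :=
  (Rs.image Reaction.reactant).filter (fun σ => σ.map μ = ρ0.map μ)

/-- backward splitter condition for a pair `(X,Y)` w.r.t. the choice function `μ`. -/
def BSplit [DecidableEq S] (Rs : Finset (Reaction S)) (μ : S → S) (X Y : S) : Prop :=
  ∀ ρ0 ∈ Rs.image Reaction.reactant,
    frM Rs X (reactClass Rs μ ρ0) = frM Rs Y (reactClass Rs μ ρ0)

/-- `e` (with choice function `μ`) is a backward CRN bisimulation. -/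
def IsBB [DecidableEq S] (Rs : Finset (Reaction S)) (e : S → S → Prop) (μ : S → S) : Prop :=
  Equivalence e ∧ IsChoice e μ ∧ ∀ X Y, e X Y → BSplit Rs μ X Y

/-- `V` is constant on the partition induced by `e`. -/
def ConstOn (e : S → S → Prop) (V : S → ℝ) : Prop := ∀ X Y, e X Y → V X = V Y

/-- the sum of `V` over the block of `W`. -/
noncomputable def blockSum [Fintype S] (e : S → S → Prop) (V : S → ℝ) (W : S) : ℝ :=
  ∑ Z : S, if e W Z then V Z else 0


section Aux

variable {S : Type*} [Fintype S] [DecidableEq S]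

lemma prod_pow_count (V : S → ℝ) (σ : Multiset S) :
    ∏ Y : S, V Y ^ σ.count Y = (σ.map V).prod := by
  rw [Finset.prod_multiset_map_count]
  refine (Finset.prod_subset (Finset.subset_univ _) ?_).symm
  intro Y _ h
  rw [Multiset.count_eq_zero_of_notMem (by simpa using h), pow_zero]

lemma mono_const {e : S → S → Prop} {μ : S → S} (hμ : IsChoice e μ)
    {V : S → ℝ} (hV : ConstOn e V) (σ : Multiset S) :
    ∏ Y : S, V Y ^ σ.count Y = ∏ Y : S, V Y ^ (σ.map μ).count Y := by
  rw [prod_pow_count, prod_pow_count, Multiset.map_map]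
  congr 1
  exact Multiset.map_congr rfl fun y _ => hV y (μ y) (hμ.1 y)

lemma key_id (Rs : Finset (Reaction S)) {e : S → S → Prop} {μ : S → S}
    (hμ : IsChoice e μ) (X : S) (V : S → ℝ) (hV : ConstOn e V) :
    vf Rs V X =
      ∑ m ∈ (Rs.image Reaction.reactant).image (fun ρ => ρ.map μ),
        frM Rs X ((Rs.image Reaction.reactant).filter (fun σ => σ.map μ = m)) *
          ∏ Y : S, V Y ^ m.count Y := by
  have step1 :
      ∑ m ∈ (Rs.image Reaction.reactant).image (fun ρ => ρ.map μ),
        frM Rs X ((Rs.image Reaction.reactant).filter (fun σ => σ.map μ = m)) *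
          ∏ Y : S, V Y ^ m.count Y
      = ∑ m ∈ (Rs.image Reaction.reactant).image (fun ρ => ρ.map μ),
          ∑ σ ∈ (Rs.image Reaction.reactant).filter (fun σ => σ.map μ = m),
            fr Rs X σ * ∏ Y : S, V Y ^ σ.count Y := by
    refine Finset.sum_congr rfl fun m hm => ?_
    rw [frM, Finset.sum_mul]
    refine Finset.sum_congr rfl fun σ hσ => ?_
    rw [Finset.mem_filter] at hσ
    rw [← hσ.2, ← mono_const hμ hV σ]
  rw [step1,
    Finset.sum_fiberwise_of_maps_to (fun σ hσ => Finset.mem_image_of_mem _ hσ)]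
  simp only [fr, Finset.sum_mul, ite_mul, zero_mul]
  rw [Finset.sum_comm]
  refine (Finset.sum_congr rfl fun r hr => ?_)
  rw [Finset.sum_ite_eq, if_pos (Finset.mem_image_of_mem _ hr)]

lemma map_mu_fix {e : S → S → Prop} {μ : S → S} (hμ : IsChoice e μ)
    (Rs : Finset (Reaction S))
    {m : Multiset S} (hm : m ∈ (Rs.image Reaction.reactant).image (fun ρ => ρ.map μ)) :
    m.map μ = m := by
  obtain ⟨ρ, _, rfl⟩ := Finset.mem_image.mp hm
  rw [Multiset.map_map]
  exact Multiset.map_congr rfl fun y _ => (hμ.2 y (μ y) (hμ.1 y)).symm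

lemma coeffs_zero (Rs : Finset (Reaction S)) {e : S → S → Prop} {μ : S → S}
    (hμ : IsChoice e μ) (c : Multiset S → ℝ)
    (h : ∀ V : S → ℝ, (∀ Y, 0 ≤ V Y) → ConstOn e V →
      ∑ m ∈ (Rs.image Reaction.reactant).image (fun ρ => ρ.map μ),
        c m * ∏ Y : S, V Y ^ m.count Y = 0) :
    ∀ m ∈ (Rs.image Reaction.reactant).image (fun ρ => ρ.map μ), c m = 0 := by
  classical
  set M := (Rs.image Reaction.reactant).image (fun ρ => ρ.map μ) with hM
  set P : MvPolynomial S ℝ :=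
    ∑ m ∈ M, MvPolynomial.monomial (2 • Multiset.toFinsupp m) (c m) with hP
  have hPzero : P = 0 := by
    apply MvPolynomial.funext
    intro x
    rw [map_zero]
    have hx : ∀ Y, (0:ℝ) ≤ (x (μ Y))^2 := fun Y => sq_nonneg _
    have hconst : ConstOn e (fun Y => (x (μ Y))^2) := by
      intro A B hAB; simp only [hμ.2 A B hAB]
    have hmain := h (fun Y => (x (μ Y))^2) hx hconst
    rw [hP, map_sum]
    rw [← hmain]
    refine Finset.sum_congr rfl fun m hm => ?_
    rw [MvPolynomial.eval_monomial]
    rw [Finsupp.prod_fintype _ _ (fun i => pow_zero _)]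
    congr 1
    have hfix : m.map μ = m := map_mu_fix hμ Rs hm
    calc ∏ Y : S, x Y ^ ((2 • Multiset.toFinsupp m) Y)
        = ∏ Y : S, (x Y ^ m.count Y) ^ 2 := by
          refine Finset.prod_congr rfl fun Y _ => ?_
          rw [Finsupp.smul_apply, Multiset.toFinsupp_apply, smul_eq_mul, ← pow_mul,
            mul_comm]
      _ = (∏ Y : S, x Y ^ m.count Y) ^ 2 := by rw [Finset.prod_pow]
      _ = ((m.map x).prod) ^ 2 := by rw [prod_pow_count]
      _ = (m.map fun y => (x y)^2).prod := (Multiset.prod_map_pow).symm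
      _ = (m.map fun y => (x (μ y))^2).prod := by
          conv_lhs => rw [← hfix, Multiset.map_map]
          rfl
      _ = ∏ Y : S, ((x (μ Y))^2) ^ m.count Y := (prod_pow_count _ _).symm
  intro m0 hm0
  have hinj : ∀ m ∈ M, 2 • Multiset.toFinsupp m = 2 • Multiset.toFinsupp m0 → m = m0 := by
    intro m _ hmm
    have : Multiset.toFinsupp m = Multiset.toFinsupp m0 := by
      ext i
      have := DFunLike.congr_fun hmm i
      simp only [Finsupp.smul_apply, smul_eq_mul] at this
      omega
    exact Multiset.toFinsupp.injective this
  have hc : MvPolynomial.coeff (2 • Multiset.toFinsupp m0) P = c m0 := by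
    rw [hP, MvPolynomial.coeff_sum]
    rw [Finset.sum_eq_single m0]
    · rw [MvPolynomial.coeff_monomial, if_pos rfl]
    · intro m hm hne
      rw [MvPolynomial.coeff_monomial, if_neg (fun hcontra => hne (hinj m hm hcontra))]
    · intro hcontra; exact absurd hm0 hcontra
  rw [hPzero, MvPolynomial.coeff_zero] at hc
  exact hc.symm

end Aux

/-- Polynomial identity underlying backward bisimulation: at every nonnegative `V`
constant on the partition, `F_X(V)` equals the sum over the `≈`-classes of reactant
multisets of the cumulative flux coefficient times the class monomial. Consequently,
two species of a common block have equal vector field components at all such `V` iff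
all their cumulative class coefficients coincide. -/
theorem stmt18 {S : Type*} [Fintype S] [DecidableEq S]
    (Rs : Finset (Reaction S)) (hpos : ∀ r ∈ Rs, 0 < r.rate)
    (e : S → S → Prop) (he : Equivalence e)
    (μ : S → S) (hμ : IsChoice e μ) :
    (∀ (X : S) (V : S → ℝ), (∀ Y, 0 ≤ V Y) → ConstOn e V →
      vf Rs V X =
        ∑ m ∈ (Rs.image Reaction.reactant).image (fun ρ => ρ.map μ),
          frM Rs X ((Rs.image Reaction.reactant).filter (fun σ => σ.map μ = m)) *
            ∏ Y : S, V Y ^ m.count Y) ∧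
    (∀ Xi Xj : S, e Xi Xj →
      ((∀ V : S → ℝ, (∀ Y, 0 ≤ V Y) → ConstOn e V → vf Rs V Xi = vf Rs V Xj) ↔
        ∀ m ∈ (Rs.image Reaction.reactant).image (fun ρ => ρ.map μ),
          frM Rs Xi ((Rs.image Reaction.reactant).filter (fun σ => σ.map μ = m))
            = frM Rs Xj ((Rs.image Reaction.reactant).filter (fun σ => σ.map μ = m)))) := by
  constructor
  · intro X V _ hV
    exact key_id Rs hμ X V hV
  · intro Xi Xj _
    constructor
    · intro h
      have hz := coeffs_zero Rs hμ
        (fun m => frM Rs Xi ((Rs.image Reaction.reactant).filter (fun σ => σ.map μ = m))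
          - frM Rs Xj ((Rs.image Reaction.reactant).filter (fun σ => σ.map μ = m)))
        (by
          intro V hVpos hV
          have h1 := key_id Rs hμ Xi V hV
          have h2 := key_id Rs hμ Xj V hV
          have h3 := h V hVpos hV
          simp only [sub_mul]
          rw [Finset.sum_sub_distrib, ← h1, ← h2, h3, sub_self])
      intro m hm
      have := hz m hm
      linarith
    · intro h V hVpos hV
      rw [key_id Rs hμ Xi V hV, key_id Rs hμ Xj V hV]
      exact Finset.sum_congr rfl fun m hm => by rw [h m hm]
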